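/- Let a, b, c > 0 and set s_* := (b + √(b² + 24ac))/(4c). The set of global minimizers over S₀ of the Landau-de Gennes bulk potential Q ↦ −(a/2) tr Q² − (b/3) tr Q³ + (c/4)(tr Q²)² is exactly { s_* ( n⊗n − (1/3)Id ) : n ∈ ℝ³, |n| = 1 }. Moreover, every such minimizer Q satisfies |Q| = s_* √(2/3) and 6 (tr Q³)² = (tr Q²)³ (that is, β(Q) = 0). -/

import Mathlib

open Matrix

noncomputable section

abbrev M3 : Type := Matrix (Fin 3) (Fin 3) ℝ

/-- The space S₀ of symmetric traceless 3×3 real matrices. -/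
def S0 : Set M3 := {Q | Qᵀ = Q ∧ Q.trace = 0}

/-- The Frobenius norm. -/
def frob (Q : M3) : ℝ := Real.sqrt (∑ i, ∑ j, (Q i j) ^ 2)

/-- s_* = (b + √(b² + 24ac))/(4c). -/
def sstar (a b c : ℝ) : ℝ := (b + Real.sqrt (b ^ 2 + 24 * a * c)) / (4 * c)

/-- The Landau-de Gennes bulk potential −(a/2)tr Q² − (b/3)tr Q³ + (c/4)(tr Q²)². -/
def fLG (a b c : ℝ) (Q : M3) : ℝ :=
  -(a/2) * (Q * Q).trace - (b/3) * (Q * Q * Q).trace + (c/4) * ((Q * Q).trace) ^ 2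

/-!
For `Q ∈ S₀` the eigenvalues sum to zero, and for such triples `(tr Q²)³ - 6 (tr Q³)²` is twice
the discriminant `∏ (λᵢ - λⱼ)²`. Writing `tr Q² = 2 s² / 3` with `s ≥ 0`, this gives
`tr Q³ ≤ 2 s³ / 9`, hence `f(Q) ≥ g(s) := -(a/3) s² - (2b/27) s³ + (c/9) s⁴`, with equality iff
`tr Q³ = 2 s³ / 9`; on the uniaxial tensors `s (n ⊗ n - Id / 3)` with `|n| = 1`, `f = g(s)`.
On `[0, ∞)` the quartic `g` is uniquely minimized at its positive critical point `s_*`.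
At a minimizer all these inequalities are equalities, so by Cayley–Hamilton
`(Q + s_*/3)² (Q - 2 s_*/3) = 0`; symmetry removes the square, so `(Q + s_*/3) / s_*` is a
symmetric idempotent of trace one, that is `n ⊗ n` for a unit vector `n`.
-/

theorem Matrix.IsHermitian.trace_pow_eq_sum_eigenvalues_pow {𝕜 n : Type*} [RCLike 𝕜] [Fintype n]
    [DecidableEq n] {A : Matrix n n 𝕜} (hA : A.IsHermitian) (k : ℕ) :
    (A ^ k).trace = ∑ i, (hA.eigenvalues i : 𝕜) ^ k := by
  conv_lhs => rw [hA.spectral_theorem, ← map_pow, Unitary.conjStarAlgAut_apply, trace_mul_cycle,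
    Unitary.coe_star_mul_self, one_mul, diagonal_pow, trace_diagonal]
  rfl

theorem Matrix.mul_eq_zero_of_mul_self_mul_eq_zero {R n : Type*} [Fintype n] [PartialOrder R]
    [NonUnitalRing R] [StarRing R] [StarOrderedRing R] [NoZeroDivisors R] {A B : Matrix n n R}
    (hA : Aᴴ = A) (hB : Bᴴ = B) (h : A * A * B = 0) : A * B = 0 := by
  rw [← trace_conjTranspose_mul_self_eq_zero_iff, conjTranspose_mul, hA, hB, mul_assoc,
    ← mul_assoc A, h, mul_zero, trace_zero]

section RealSymmetric

variable {ι : Type*} [Fintype ι]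

theorem Matrix.IsSymm.trace_mul_self_nonneg {Q : Matrix ι ι ℝ} (hQ : Q.IsSymm) :
    0 ≤ (Q * Q).trace := by
  have h := (posSemidef_self_mul_conjTranspose Q).trace_nonneg
  rwa [conjTranspose_eq_transpose_of_trivial, hQ] at h

theorem Matrix.vecMulVec_mul_self_of_sum_sq_eq_one {n : ι → ℝ} (hn : ∑ i, n i ^ 2 = 1) :
    vecMulVec n n * vecMulVec n n = vecMulVec n n := by
  rw [vecMulVec_mul_vecMulVec, show n ⬝ᵥ n = 1 by simpa [dotProduct, sq] using hn, one_smul]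

theorem Matrix.trace_vecMulVec_of_sum_sq_eq_one {n : ι → ℝ} (hn : ∑ i, n i ^ 2 = 1) :
    (vecMulVec n n).trace = 1 := by
  simpa [dotProduct, sq] using hn

variable {P : Matrix ι ι ℝ}

theorem Matrix.mulVec_row_of_idempotent (hsym : Pᵀ = P) (hidem : P * P = P) (i : ι) :
    P *ᵥ P i = P i := by
  rw [← vecMul_transpose, hsym, ← mul_apply_eq_vecMul, hidem]

-- `M := P i i • P - P i ⊗ P i` has `M * M = P i i • M` and `tr M = 0`, so `tr (Mᵀ * M) = 0`.
theorem Matrix.smul_eq_vecMulVec_of_idempotent (hsym : Pᵀ = P) (hidem : P * P = P)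
    (htr : P.trace = 1) (i : ι) : P i i • P = vecMulVec (P i) (P i) := by
  set w := P i
  have hww : w ⬝ᵥ w = P i i := congrFun (mulVec_row_of_idempotent hsym hidem i) i
  have hPV : P * vecMulVec w w = vecMulVec w w := by
    rw [mul_vecMulVec, mulVec_row_of_idempotent hsym hidem]
  have hVP : vecMulVec w w * P = vecMulVec w w := by
    rw [vecMulVec_mul, ← mul_apply_eq_vecMul, hidem]
  have hVV : vecMulVec w w * vecMulVec w w = P i i • vecMulVec w w := by
    rw [vecMulVec_mul_vecMulVec, hww, vecMulVec_smul]
  set M := P i i • P - vecMulVec w w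
  have hMsym : Mᴴ = M := by
    simp only [M, conjTranspose_eq_transpose_of_trivial, transpose_sub, transpose_smul, hsym,
      transpose_vecMulVec]
  have hMM : M * M = P i i • M := by
    simp only [M, sub_mul, mul_sub, Matrix.smul_mul, Matrix.mul_smul, hidem, hPV, hVP, hVV]
    module
  have hM : M = 0 := by
    rw [← trace_conjTranspose_mul_self_eq_zero_iff, hMsym, hMM, trace_smul]
    simp [M, htr, hww]
  exact sub_eq_zero.mp hM

theorem Matrix.exists_eq_vecMulVec_of_idempotent (hsym : Pᵀ = P) (hidem : P * P = P)
    (htr : P.trace = 1) : ∃ n : ι → ℝ, ∑ i, n i ^ 2 = 1 ∧ P = vecMulVec n n := by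
  obtain ⟨i, -, hi⟩ := Finset.exists_ne_zero_of_sum_ne_zero (htr.trans_ne one_ne_zero)
  have hd : 0 < P i i := by
    refine lt_of_le_of_ne ?_ (Ne.symm hi)
    rw [← congrFun (mulVec_row_of_idempotent hsym hidem i) i]
    exact dotProduct_self_star_nonneg _
  set n := (√(P i i))⁻¹ • P i
  have hP : P = vecMulVec n n := by
    rw [smul_vecMulVec, vecMulVec_smul, smul_smul, ← smul_eq_vecMulVec_of_idempotent hsym hidem htr,
      smul_smul, ← mul_inv, ← sq, Real.sq_sqrt hd.le, inv_mul_cancel₀ hd.ne', one_smul]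
  refine ⟨n, ?_, hP⟩
  calc ∑ i, n i ^ 2 = (vecMulVec n n).trace := by simp [dotProduct, sq]
    _ = 1 := by rw [← hP, htr]

end RealSymmetric

theorem six_mul_sq_sum_cube_le_of_sum_eq_zero {x y z : ℝ} (h : x + y + z = 0) :
    6 * (x ^ 3 + y ^ 3 + z ^ 3) ^ 2 ≤ (x ^ 2 + y ^ 2 + z ^ 2) ^ 3 := by
  have hdisc : (x ^ 2 + y ^ 2 + z ^ 2) ^ 3 - 6 * (x ^ 3 + y ^ 3 + z ^ 3) ^ 2
      = 2 * ((x - y) * (y - z) * (z - x)) ^ 2 := by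
    obtain rfl : z = -x - y := by linarith
    ring
  nlinarith [sq_nonneg ((x - y) * (y - z) * (z - x))]

section TracelessThreeByThree

variable {Q : M3}

theorem frob_eq_sqrt_trace_mul_self (hQ : Qᵀ = Q) : frob Q = √((Q * Q).trace) := by
  rw [frob, ← congrArg (Q * ·) hQ]
  simp [trace, mul_apply, sq]

theorem six_mul_sq_trace_cube_le (hQ : Q ∈ S0) :
    6 * (Q * Q * Q).trace ^ 2 ≤ (Q * Q).trace ^ 3 := by
  have hH : Q.IsHermitian := isHermitian_iff_isSymm.mpr hQ.1
  have htr (k : ℕ) : (Q ^ k).trace = ∑ i, hH.eigenvalues i ^ k :=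
    hH.trace_pow_eq_sum_eigenvalues_pow k
  have h1 := htr 1
  rw [pow_one, hQ.2] at h1
  rw [← pow_three', ← pow_two, htr, htr]
  simp only [Fin.sum_univ_three, pow_one] at h1 ⊢
  exact six_mul_sq_sum_cube_le_of_sum_eq_zero h1.symm

theorem cayley_hamilton_of_trace_eq_zero (htr : Q.trace = 0) :
    Q * Q * Q = ((Q * Q).trace / 2) • Q + Q.det • (1 : M3) := by
  have h22 : Q 2 2 = -Q 0 0 - Q 1 1 := by
    rw [trace_fin_three] at htr
    linarith
  ext i j
  fin_cases i <;> fin_cases j <;>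
    simp [mul_apply, trace_fin_three, det_fin_three, Fin.sum_univ_three, one_apply, h22] <;> ring

theorem trace_cube_eq_three_mul_det (htr : Q.trace = 0) :
    (Q * Q * Q).trace = 3 * Q.det := by
  rw [cayley_hamilton_of_trace_eq_zero htr, trace_add, trace_smul, trace_smul, htr, trace_one]
  simp
  ring

end TracelessThreeByThree

def uniaxial (s : ℝ) (n : Fin 3 → ℝ) : M3 := s • (vecMulVec n n - (1/3 : ℝ) • (1 : M3))

def fLGUniaxial (a b c s : ℝ) : ℝ := -(a / 3) * s ^ 2 - (2 * b / 27) * s ^ 3 + (c / 9) * s ^ 4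

section Uniaxial

variable {n : Fin 3 → ℝ} (s : ℝ)

theorem uniaxial_mem_S0 (hn : ∑ i, n i ^ 2 = 1) : uniaxial s n ∈ S0 := by
  refine ⟨by simp [uniaxial], ?_⟩
  simp [uniaxial, trace_sub, trace_vecMulVec_of_sum_sq_eq_one hn]

theorem uniaxial_mul_self (hn : ∑ i, n i ^ 2 = 1) :
    uniaxial s n * uniaxial s n = s ^ 2 • ((1/3 : ℝ) • vecMulVec n n + (1/9 : ℝ) • 1) := by
  simp only [uniaxial, Matrix.smul_mul, Matrix.mul_smul, sub_mul, mul_sub,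
    vecMulVec_mul_self_of_sum_sq_eq_one hn, Matrix.mul_one, Matrix.one_mul]
  module

theorem trace_uniaxial_mul_self (hn : ∑ i, n i ^ 2 = 1) :
    (uniaxial s n * uniaxial s n).trace = 2 / 3 * s ^ 2 := by
  rw [uniaxial_mul_self s hn]
  simp [trace_vecMulVec_of_sum_sq_eq_one hn]
  ring

theorem trace_uniaxial_cube (hn : ∑ i, n i ^ 2 = 1) :
    (uniaxial s n * uniaxial s n * uniaxial s n).trace = 2 / 9 * s ^ 3 := by
  rw [uniaxial_mul_self s hn]
  simp only [uniaxial, Matrix.smul_mul, Matrix.mul_smul, add_mul, mul_sub,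
    vecMulVec_mul_self_of_sum_sq_eq_one hn, Matrix.mul_one, Matrix.one_mul, trace_smul,
    trace_add, trace_sub, trace_vecMulVec_of_sum_sq_eq_one hn, trace_one]
  simp
  ring

theorem fLG_uniaxial (a b c : ℝ) (hn : ∑ i, n i ^ 2 = 1) :
    fLG a b c (uniaxial s n) = fLGUniaxial a b c s := by
  rw [fLG, trace_uniaxial_mul_self s hn, trace_uniaxial_cube s hn, fLGUniaxial]
  ring

theorem frob_uniaxial {s : ℝ} (hs : 0 ≤ s) (hn : ∑ i, n i ^ 2 = 1) :
    frob (uniaxial s n) = s * √(2 / 3) := by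
  rw [frob_eq_sqrt_trace_mul_self (uniaxial_mem_S0 s hn).1, trace_uniaxial_mul_self s hn,
    mul_comm, Real.sqrt_mul (sq_nonneg s), Real.sqrt_sq hs]

end Uniaxial

section UniaxialPotential

variable {a b c : ℝ}

theorem sstar_pos (hb : 0 < b) (hc : 0 < c) : 0 < sstar a b c := by
  unfold sstar
  positivity

theorem sstar_isRoot (ha : 0 ≤ a) (hc : 0 < c) :
    2 * c * sstar a b c ^ 2 - b * sstar a b c - 3 * a = 0 := by
  have hR : √(b ^ 2 + 24 * a * c) ^ 2 = b ^ 2 + 24 * a * c := Real.sq_sqrt (by positivity)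
  unfold sstar
  generalize √(b ^ 2 + 24 * a * c) = R at hR
  field_simp
  linear_combination 2 * hR

theorem fLGUniaxial_sstar_lt (ha : 0 < a) (hb : 0 < b) (hc : 0 < c) {s : ℝ} (hs : 0 ≤ s)
    (hne : s ≠ sstar a b c) : fLGUniaxial a b c (sstar a b c) < fLGUniaxial a b c s := by
  set t := sstar a b c
  have ht : 0 < t := sstar_pos hb hc
  have hroot : 2 * c * t ^ 2 - b * t - 3 * a = 0 := sstar_isRoot ha.le hc
  have hbt : b < 2 * c * t := by nlinarith
  -- `t` is a critical point of `fLGUniaxial`, so the difference has a double root at `t`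
  have hfactor : 9 * (fLGUniaxial a b c s - fLGUniaxial a b c t) =
      (s - t) ^ 2 * (c * s ^ 2 + (2 * c * t - 2 * b / 3) * s + t * (c * t - b / 3)) := by
    unfold fLGUniaxial
    linear_combination (s ^ 2 - t ^ 2) * hroot
  have hquad : 0 < c * s ^ 2 + (2 * c * t - 2 * b / 3) * s + t * (c * t - b / 3) := by
    have : 0 < t * (c * t - b / 3) := mul_pos ht (by linarith)
    have : 0 ≤ (2 * c * t - 2 * b / 3) * s := mul_nonneg (by linarith) hs
    positivity
  nlinarith [mul_pos (sq_pos_of_ne_zero (sub_ne_zero.mpr hne)) hquad]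

theorem fLGUniaxial_sstar_le (ha : 0 < a) (hb : 0 < b) (hc : 0 < c) {s : ℝ} (hs : 0 ≤ s) :
    fLGUniaxial a b c (sstar a b c) ≤ fLGUniaxial a b c s := by
  rcases eq_or_ne s (sstar a b c) with rfl | hne
  · exact le_rfl
  · exact (fLGUniaxial_sstar_lt ha hb hc hs hne).le

end UniaxialPotential

-- the `s ≥ 0` with `tr Q² = 2 s² / 3`, the order parameter of the uniaxial tensors of norm `|Q|`
def scalarOrder (Q : M3) : ℝ := √(3 / 2 * (Q * Q).trace)

section ScalarOrder

variable {Q : M3}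

theorem scalarOrder_nonneg : 0 ≤ scalarOrder Q := Real.sqrt_nonneg _

theorem trace_mul_self_eq_scalarOrder (hQ : Q ∈ S0) :
    (Q * Q).trace = 2 / 3 * scalarOrder Q ^ 2 := by
  rw [scalarOrder, Real.sq_sqrt (by linarith [IsSymm.trace_mul_self_nonneg hQ.1])]
  ring

theorem trace_cube_le_scalarOrder (hQ : Q ∈ S0) :
    (Q * Q * Q).trace ≤ 2 / 9 * scalarOrder Q ^ 3 := by
  have h := six_mul_sq_trace_cube_le hQ
  rw [trace_mul_self_eq_scalarOrder hQ] at h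
  have hσ := scalarOrder_nonneg (Q := Q)
  exact (abs_le_of_sq_le_sq' (by nlinarith) (by positivity)).2

theorem fLG_eq_fLGUniaxial_scalarOrder_add (a b c : ℝ) (hQ : Q ∈ S0) :
    fLG a b c Q = fLGUniaxial a b c (scalarOrder Q)
      + b / 3 * (2 / 9 * scalarOrder Q ^ 3 - (Q * Q * Q).trace) := by
  rw [fLG, fLGUniaxial, trace_mul_self_eq_scalarOrder hQ]
  ring

end ScalarOrder

theorem eq_uniaxial_of_traces {Q : M3} {s : ℝ} (hQ : Q ∈ S0) (hs : 0 < s)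
    (h2 : (Q * Q).trace = 2 / 3 * s ^ 2) (h3 : (Q * Q * Q).trace = 2 / 9 * s ^ 3) :
    ∃ n : Fin 3 → ℝ, ∑ i, n i ^ 2 = 1 ∧ Q = uniaxial s n := by
  set A := Q + (s / 3) • (1 : M3)
  have hdet : Q.det = 2 / 27 * s ^ 3 := by
    linarith [trace_cube_eq_three_mul_det hQ.2]
  -- the characteristic polynomial of `Q` is `(X + s/3)² (X - 2s/3)`
  have hAAC : A * A * (A - s • 1) = 0 := by
    have hCH := cayley_hamilton_of_trace_eq_zero hQ.2
    rw [h2, hdet] at hCH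
    simp only [A, add_mul, mul_add, mul_sub, Matrix.smul_mul, Matrix.mul_smul,
      Matrix.one_mul, Matrix.mul_one, hCH]
    module
  have hAsym : Aᴴ = A := by
    simp [A, conjTranspose_eq_transpose_of_trivial, hQ.1]
  have hA : A * A = s • A := by
    have h := mul_eq_zero_of_mul_self_mul_eq_zero hAsym
      (by simp only [conjTranspose_sub, conjTranspose_smul, conjTranspose_one, hAsym, star_trivial])
      hAAC
    rwa [mul_sub, Matrix.mul_smul, Matrix.mul_one, sub_eq_zero] at h
  obtain ⟨n, hn, hP⟩ : ∃ n : Fin 3 → ℝ, ∑ i, n i ^ 2 = 1 ∧ s⁻¹ • A = vecMulVec n n := by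
    refine exists_eq_vecMulVec_of_idempotent ?_ ?_ ?_
    · rw [transpose_smul, ← conjTranspose_eq_transpose_of_trivial, hAsym]
    · rw [Matrix.smul_mul, Matrix.mul_smul, hA, smul_smul, smul_smul, mul_assoc,
        inv_mul_cancel₀ hs.ne', mul_one]
    · rw [trace_smul, trace_add, hQ.2, trace_smul, trace_one]
      simp [hs.ne']
  refine ⟨n, hn, ?_⟩
  rw [uniaxial, ← hP, smul_sub, smul_smul, mul_inv_cancel₀ hs.ne', one_smul]
  simp only [A, smul_smul]
  module

section Minimizers

variable {a b c : ℝ} {Q : M3}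

theorem fLGUniaxial_sstar_le_fLG (ha : 0 < a) (hb : 0 < b) (hc : 0 < c) (hQ : Q ∈ S0) :
    fLGUniaxial a b c (sstar a b c) ≤ fLG a b c Q := by
  rw [fLG_eq_fLGUniaxial_scalarOrder_add a b c hQ]
  have := fLGUniaxial_sstar_le ha hb hc (scalarOrder_nonneg (Q := Q))
  have := trace_cube_le_scalarOrder hQ
  nlinarith

theorem eq_uniaxial_sstar_of_fLG_le (ha : 0 < a) (hb : 0 < b) (hc : 0 < c) (hQ : Q ∈ S0)
    (hle : fLG a b c Q ≤ fLGUniaxial a b c (sstar a b c)) :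
    ∃ n : Fin 3 → ℝ, ∑ i, n i ^ 2 = 1 ∧ Q = uniaxial (sstar a b c) n := by
  have hf := fLG_eq_fLGUniaxial_scalarOrder_add a b c hQ
  have h3 := trace_cube_le_scalarOrder hQ
  have hσ : scalarOrder Q = sstar a b c := by
    by_contra hne
    have := fLGUniaxial_sstar_lt ha hb hc scalarOrder_nonneg hne
    nlinarith
  have h3' : (Q * Q * Q).trace = 2 / 9 * sstar a b c ^ 3 := by
    rw [← hσ]
    nlinarith [fLGUniaxial_sstar_le ha hb hc (scalarOrder_nonneg (Q := Q))]
  exact eq_uniaxial_of_traces hQ (sstar_pos hb hc) (hσ ▸ trace_mul_self_eq_scalarOrder hQ) h3'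

end Minimizers

theorem stmt4 (a b c : ℝ) (ha : 0 < a) (hb : 0 < b) (hc : 0 < c) :
    ({Q ∈ S0 | ∀ P ∈ S0, fLG a b c Q ≤ fLG a b c P} =
      {Q : M3 | ∃ n : Fin 3 → ℝ, (∑ i, n i ^ 2) = 1 ∧
        Q = sstar a b c • (vecMulVec n n - (1/3 : ℝ) • (1 : M3))}) ∧
    ∀ Q ∈ {Q ∈ S0 | ∀ P ∈ S0, fLG a b c Q ≤ fLG a b c P},
      frob Q = sstar a b c * Real.sqrt (2/3) ∧
      6 * ((Q * Q * Q).trace) ^ 2 = ((Q * Q).trace) ^ 3 := by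
  have hmin : {Q ∈ S0 | ∀ P ∈ S0, fLG a b c Q ≤ fLG a b c P} =
      {Q : M3 | ∃ n : Fin 3 → ℝ, ∑ i, n i ^ 2 = 1 ∧ Q = uniaxial (sstar a b c) n} := by
    ext Q
    constructor
    · rintro ⟨hQ, hQmin⟩
      have he : ∑ i, (Pi.single 0 1 : Fin 3 → ℝ) i ^ 2 = 1 := by simp [Fin.sum_univ_three]
      refine eq_uniaxial_sstar_of_fLG_le ha hb hc hQ ?_
      rw [← fLG_uniaxial _ a b c he]
      exact hQmin _ (uniaxial_mem_S0 _ he)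
    · rintro ⟨n, hn, rfl⟩
      refine ⟨uniaxial_mem_S0 _ hn, fun P hP => ?_⟩
      rw [fLG_uniaxial _ a b c hn]
      exact fLGUniaxial_sstar_le_fLG ha hb hc hP
  refine ⟨hmin, fun Q hQ => ?_⟩
  obtain ⟨n, hn, rfl⟩ := hmin ▸ hQ
  refine ⟨frob_uniaxial (sstar_pos hb hc).le hn, ?_⟩
  rw [trace_uniaxial_mul_self _ hn, trace_uniaxial_cube _ hn]
  ring
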